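/- For n ≥ 3, F_{h,n}^{⌊(n-3)/2⌋}(x) = F_{h,n}(x) − n·h(x)/2 if n is even, and F_{h,n}^{⌊(n-3)/2⌋}(x) = F_{h,n}(x) − 1 if n is odd. -/
import Mathlib


open Finset

/-- Incomplete h-Fibonacci polynomials: F_{h,n}^l = ∑_{i=0}^l C(n-1-i,i) h^(n-1-2i). -/
noncomputable def incF (h : ℝ) (n l : ℕ) : ℝ :=
  ∑ i ∈ Finset.range (l + 1), (Nat.choose (n - 1 - i) i : ℝ) * h ^ (n - 1 - 2 * i)

/-- Incomplete h-Lucas polynomials: L_{h,n}^l = ∑_{i=0}^l (n/(n-i)) C(n-i,i) h^(n-2i). -/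
noncomputable def incL (h : ℝ) (n l : ℕ) : ℝ :=
  ∑ i ∈ Finset.range (l + 1), ((n : ℝ) / ((n - i : ℕ) : ℝ)) * (Nat.choose (n - i) i : ℝ) * h ^ (n - 2 * i)

/-- h-Fibonacci sequence. -/
noncomputable def Fh (h : ℝ) : ℕ → ℝ
  | 0 => 0
  | 1 => 1
  | n + 2 => h * Fh h (n + 1) + Fh h n

/-- h-Lucas sequence. -/
noncomputable def Lh (h : ℝ) : ℕ → ℝ
  | 0 => 2
  | 1 => h
  | n + 2 => h * Lh h (n + 1) + Lh h n

lemma incF_rec (h : ℝ) (m : ℕ) :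
    incF h (m + 3) (m + 2) = h * incF h (m + 2) (m + 1) + incF h (m + 1) m := by
  have hL : incF h (m + 3) (m + 2)
      = ∑ i ∈ Finset.range (m + 3), (Nat.choose (m + 2 - i) i : ℝ) * h ^ (m + 2 - 2 * i) := rfl
  have hM : incF h (m + 2) (m + 1)
      = ∑ i ∈ Finset.range (m + 2), (Nat.choose (m + 1 - i) i : ℝ) * h ^ (m + 1 - 2 * i) := rfl
  have hR : incF h (m + 1) m
      = ∑ i ∈ Finset.range (m + 1), (Nat.choose (m - i) i : ℝ) * h ^ (m - 2 * i) := rfl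
  rw [hL, hM, hR]
  -- peel the i = 0 term from LHS
  rw [Finset.sum_range_succ'
    (fun i => (Nat.choose (m + 2 - i) i : ℝ) * h ^ (m + 2 - 2 * i)) (m + 2)]
  -- termwise split via Pascal
  have split : ∀ j ∈ Finset.range (m + 2),
      (Nat.choose (m + 2 - (j + 1)) (j + 1) : ℝ) * h ^ (m + 2 - 2 * (j + 1))
      = h * ((Nat.choose (m + 1 - (j + 1)) (j + 1) : ℝ) * h ^ (m + 1 - 2 * (j + 1)))
        + (Nat.choose (m - j) j : ℝ) * h ^ (m - 2 * j) := by
    intro j hj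
    simp only [Finset.mem_range] at hj
    rcases lt_trichotomy (2 * j) m with hc | hc | hc
    · have h1 : m + 2 - (j + 1) = (m - j) + 1 := by omega
      have h2 : m + 1 - (j + 1) = m - j := by omega
      have h3 : m + 2 - 2 * (j + 1) = m - 2 * j - 1 + 1 := by omega
      have h4 : m + 1 - 2 * (j + 1) = m - 2 * j - 1 := by omega
      have h5 : m - 2 * j = (m - 2 * j - 1) + 1 := by omega
      rw [h1, h2, h3, h4, h5, Nat.choose_succ_succ (m - j) j, pow_succ]
      push_cast
      ring
    · -- 2j = m
      have h1 : m + 2 - (j + 1) = j + 1 := by omega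
      have h2 : m + 2 - 2 * (j + 1) = 0 := by omega
      have h3 : m - j = j := by omega
      have h4 : m - 2 * j = 0 := by omega
      have h5 : Nat.choose (m + 1 - (j + 1)) (j + 1) = 0 :=
        Nat.choose_eq_zero_of_lt (by omega)
      rw [h1, h2, h3, h4, h5]
      simp
    · have c1 : Nat.choose (m + 2 - (j + 1)) (j + 1) = 0 :=
        Nat.choose_eq_zero_of_lt (by omega)
      have c2 : Nat.choose (m + 1 - (j + 1)) (j + 1) = 0 :=
        Nat.choose_eq_zero_of_lt (by omega)
      have c3 : Nat.choose (m - j) j = 0 :=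
        Nat.choose_eq_zero_of_lt (by omega)
      rw [c1, c2, c3]; simp
  rw [Finset.sum_congr rfl split, Finset.sum_add_distrib, ← Finset.mul_sum]
  -- handle the shifted middle sum: ∑_{j<m+2} A(j+1) relates to ∑_{i<m+2} A i
  have mid : ∑ j ∈ Finset.range (m + 2),
      (Nat.choose (m + 1 - (j + 1)) (j + 1) : ℝ) * h ^ (m + 1 - 2 * (j + 1))
      = (∑ i ∈ Finset.range (m + 2), (Nat.choose (m + 1 - i) i : ℝ) * h ^ (m + 1 - 2 * i))
        - h ^ (m + 1) := by
    rw [Finset.sum_range_succ'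
      (fun i => (Nat.choose (m + 1 - i) i : ℝ) * h ^ (m + 1 - 2 * i)) (m + 1),
      Finset.sum_range_succ]
    have top : Nat.choose (m + 1 - (m + 1 + 1)) (m + 1 + 1) = 0 :=
      Nat.choose_eq_zero_of_lt (by omega)
    rw [top]
    simp
  have right : ∑ j ∈ Finset.range (m + 2),
      (Nat.choose (m - j) j : ℝ) * h ^ (m - 2 * j)
      = ∑ i ∈ Finset.range (m + 1), (Nat.choose (m - i) i : ℝ) * h ^ (m - 2 * i) := by
    rw [Finset.sum_range_succ]
    have top : Nat.choose (m - (m + 1)) (m + 1) = 0 :=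
      Nat.choose_eq_zero_of_lt (by omega)
    rw [top]
    simp
  rw [mid, right]
  simp only [Nat.choose_zero_right, Nat.mul_zero, Nat.sub_zero, Nat.cast_one, one_mul]
  ring

/-- Fh equals the full-length incomplete sum. -/
lemma Fh_eq_full (h : ℝ) : ∀ m : ℕ, Fh h (m + 1) = incF h (m + 1) m := by
  have key : ∀ m : ℕ, Fh h (m + 1) = incF h (m + 1) m ∧ Fh h (m + 2) = incF h (m + 2) (m + 1) := by
    intro m
    induction m with
    | zero =>
      refine ⟨by simp [Fh, incF], ?_⟩
      show h * Fh h 1 + Fh h 0 = _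
      simp [Fh, incF, Finset.sum_range_succ]
    | succ k ih =>
      refine ⟨ih.2, ?_⟩
      have : Fh h (k + 3) = h * Fh h (k + 2) + Fh h (k + 1) := rfl
      rw [this, ih.1, ih.2, incF_rec]
  exact fun m => (key m).1

lemma incF_pad (h : ℝ) (m l : ℕ) (hl : m ≤ 2 * l + 1) :
    incF h (m + 1) (l + 1) = incF h (m + 1) l := by
  unfold incF
  rw [Finset.sum_range_succ]
  have : Nat.choose (m + 1 - 1 - (l + 1)) (l + 1) = 0 :=
    Nat.choose_eq_zero_of_lt (by omega)
  rw [this]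
  simp

lemma incF_pad_many (h : ℝ) (m l : ℕ) (hl : m ≤ 2 * l + 1) :
    ∀ d, incF h (m + 1) (l + d) = incF h (m + 1) l := by
  intro d
  induction d with
  | zero => rfl
  | succ e ih =>
    rw [show l + (e + 1) = (l + e) + 1 from rfl, incF_pad h m (l + e) (by omega), ih]

theorem incF_penultimate (h : ℝ) (n : ℕ) (hn : 3 ≤ n) :
    (Even n → incF h n ((n - 3) / 2) = Fh h n - (n : ℝ) * h / 2) ∧
    (Odd n → incF h n ((n - 3) / 2) = Fh h n - 1) := by
  constructor
  · intro hev
    obtain ⟨j, hj⟩ : ∃ j, n = 2 * j + 4 := by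
      rcases hev with ⟨t, ht⟩; exact ⟨t - 2, by omega⟩
    subst hj
    have hd : (2 * j + 4 - 3) / 2 = j := by omega
    rw [hd]
    have full : Fh h (2 * j + 4) = incF h (2 * j + 4) (2 * j + 3) := Fh_eq_full h (2 * j + 3)
    have pad : incF h (2 * j + 4) (2 * j + 3) = incF h (2 * j + 4) (j + 1) := by
      have := incF_pad_many h (2 * j + 3) (j + 1) (by omega) (j + 2)
      rwa [show (j + 1) + (j + 2) = 2 * j + 3 by omega] at this
    have step : incF h (2 * j + 4) (j + 1) = incF h (2 * j + 4) j + ((j : ℝ) + 2) * h := by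
      unfold incF
      rw [Finset.sum_range_succ]
      have e1 : 2 * j + 4 - 1 - (j + 1) = j + 2 := by omega
      have e2 : 2 * j + 4 - 1 - 2 * (j + 1) = 1 := by omega
      rw [e1, e2, Nat.choose_succ_self_right]
      push_cast
      ring
    rw [full, pad, step]
    push_cast
    ring
  · intro hodd
    obtain ⟨j, hj⟩ : ∃ j, n = 2 * j + 3 := by
      rcases hodd with ⟨t, ht⟩; exact ⟨t - 1, by omega⟩
    subst hj
    have hd : (2 * j + 3 - 3) / 2 = j := by omega
    rw [hd]
    have full : Fh h (2 * j + 3) = incF h (2 * j + 3) (2 * j + 2) := Fh_eq_full h (2 * j + 2)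
    have pad : incF h (2 * j + 3) (2 * j + 2) = incF h (2 * j + 3) (j + 1) := by
      have := incF_pad_many h (2 * j + 2) (j + 1) (by omega) (j + 1)
      rwa [show (j + 1) + (j + 1) = 2 * j + 2 by omega] at this
    have step : incF h (2 * j + 3) (j + 1) = incF h (2 * j + 3) j + 1 := by
      unfold incF
      rw [Finset.sum_range_succ]
      have e1 : 2 * j + 3 - 1 - (j + 1) = j + 1 := by omega
      have e2 : 2 * j + 3 - 1 - 2 * (j + 1) = 0 := by omega
      rw [e1, e2, Nat.choose_self]
      simp
    rw [full, pad, step]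
    ring
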